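/- Let |·| be a norm on ℝⁿ with induced logarithmic norm μ, let X ⊆ ℝⁿ, and consider the system ẋ = f(t, x) where f : ℝ × ℝⁿ → ℝⁿ is continuous with continuous partial derivatives in x. Let x' be a known trajectory of the system in X defined on an interval J, and suppose there is c ∈ ℝ such that μ(M_{x'(t)} f_t(x, s)) ≤ c for every t ∈ J, every x ∈ X, and every s ∈ [0,1]ⁿ, where f_t(·) = f(t, ·). Then for any trajectory x of the system in X defined on a subinterval [t₀, T] ⊆ J, one has |x(t) − x'(t)| ≤ e^{c(t−t₀)} |x(t₀) − x'(t₀)| for every t ∈ [t₀, T]. -/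

import Mathlib

open Filter Topology Set Matrix

/-- `N` is a norm on `ℝⁿ`. -/
def IsNorm {n : ℕ} (N : (Fin n → ℝ) → ℝ) : Prop :=
  (∀ x y, N (x + y) ≤ N x + N y) ∧
  (∀ (a : ℝ) (x : Fin n → ℝ), N (a • x) = |a| * N x) ∧
  (∀ x, N x = 0 → x = 0)

/-- The operator norm on `ℝⁿˣⁿ` induced by the norm `N`. -/
noncomputable def opNorm {n : ℕ} (N : (Fin n → ℝ) → ℝ) (A : Matrix (Fin n) (Fin n) ℝ) : ℝ :=
  sSup ((fun x => N (A.mulVec x)) '' {x | N x = 1})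

/-- The logarithmic norm `μ(A) = lim_{h → 0⁺} (‖I + hA‖ - 1)/h` induced by the norm `N`. -/
noncomputable def logNorm {n : ℕ} (N : (Fin n → ℝ) → ℝ) (A : Matrix (Fin n) (Fin n) ℝ) : ℝ :=
  limUnder (𝓝[>] (0 : ℝ)) (fun h => (opNorm N (1 + h • A) - 1) / h)

/-- The mixed Jacobian matrix `M_{x'}f(x,s)`, whose `(i,j)` entry is
`∂f_i/∂x_j(x₁, …, x_{j-1}, s_j x_j + (1-s_j) x'_j, x'_{j+1}, …, x'_n)`. -/
noncomputable def mixedJac {n m : ℕ} (f : (Fin n → ℝ) → (Fin m → ℝ)) (x' x s : Fin n → ℝ) :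
    Matrix (Fin m) (Fin n) ℝ :=
  fun i j =>
    fderiv ℝ f
      (fun k => if k < j then x k else if k = j then s j * x j + (1 - s j) * x' j else x' k)
      (Pi.single j 1) i


/-!
Put `y = x - x'`. Integrating `f_t` along the staircase from `x'(t)` to `x(t)` that moves one
coordinate at a time, every leg parametrised by the same `σ ∈ [0, 1]`, gives
`f_t(x) - f_t(x') = ∫₀¹ M(σ) y dσ` with `M(σ)` the mixed Jacobian at `s = (σ, …, σ)`, so the Euler
step is `y + h ẏ = ∫₀¹ (I + h M(σ)) y dσ`. The quotient `(‖I + hM‖ - 1)/h` decreases to `μ(M)` as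
`h ↓ 0`; by compactness of `[0, 1]` it is below `c + ε` for all `σ` once `h` is small. Hence the
upper right Dini derivative of `|y|` is at most `c |y|`, and Grönwall's inequality concludes.
-/

namespace IsNorm

variable {n : ℕ} {N : (Fin n → ℝ) → ℝ}

theorem map_zero (hN : IsNorm N) : N 0 = 0 := by
  simpa using hN.2.1 0 0

theorem map_neg (hN : IsNorm N) (x : Fin n → ℝ) : N (-x) = N x := by
  simpa using hN.2.1 (-1) x

/-- `ℝⁿ` normed by `N` rather than by the sup norm of `Fin n → ℝ`. -/
def Space (_ : IsNorm N) : Type := Fin n → ℝ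

variable (hN : IsNorm N)

instance : AddCommGroup hN.Space := inferInstanceAs (AddCommGroup (Fin n → ℝ))

instance : Module ℝ hN.Space := inferInstanceAs (Module ℝ (Fin n → ℝ))

noncomputable instance : NormedAddCommGroup hN.Space :=
  AddGroupNorm.toNormedAddCommGroup
    { toFun := N
      map_zero' := hN.map_zero
      add_le' := hN.1
      neg' := hN.map_neg
      eq_zero_of_map_eq_zero' := hN.2.2 }

noncomputable instance : NormedSpace ℝ hN.Space :=
  ⟨fun a x => (hN.2.1 a x).le⟩

instance : FiniteDimensional ℝ hN.Space := inferInstanceAs (Module.Finite ℝ (Fin n → ℝ))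

noncomputable def toSpace : (Fin n → ℝ) ≃L[ℝ] hN.Space :=
  LinearEquiv.toContinuousLinearEquiv (LinearEquiv.refl ℝ (Fin n → ℝ))

noncomputable def toCLM : Matrix (Fin n) (Fin n) ℝ →ₗ[ℝ] (hN.Space →L[ℝ] hN.Space) :=
  (LinearMap.toContinuousLinearMap : (hN.Space →ₗ[ℝ] hN.Space) ≃ₗ[ℝ] _).toLinearMap ∘ₗ
    Matrix.toLin'.toLinearMap

theorem toCLM_one : hN.toCLM 1 = 1 := by
  ext x : 1
  exact Matrix.one_mulVec x

theorem opNorm_eq_norm_toCLM (A : Matrix (Fin n) (Fin n) ℝ) : opNorm N A = ‖hN.toCLM A‖ := by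
  rw [← (hN.toCLM A).sSup_sphere_eq_norm]
  change sSup (_ '' {x : hN.Space | ‖x‖ = 1}) = _
  simp_rw [← mem_sphere_zero_iff_norm, ofPred_mem_eq]
  rfl

end IsNorm

section LogSlope

variable {E : Type*} [NormedAddCommGroup E] [NormedSpace ℝ E]

noncomputable def logSlope (B : E →L[ℝ] E) (h : ℝ) : ℝ := (‖1 + h • B‖ - 1) / h

theorem monotoneOn_logSlope (B : E →L[ℝ] E) : MonotoneOn (logSlope B) (Ioi 0) := by
  rintro a (ha : 0 < a) b (hb : 0 < b) hab
  have hθ : 0 ≤ a / b := div_nonneg ha.le hb.le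
  have hθ' : 0 ≤ 1 - a / b := sub_nonneg.2 ((div_le_one hb).2 hab)
  have hconv : (1 : E →L[ℝ] E) + a • B = (1 - a / b) • 1 + (a / b) • (1 + b • B) := by
    rw [smul_add, smul_smul, div_mul_cancel₀ a hb.ne', ← add_assoc, ← add_smul, sub_add_cancel,
      one_smul]
  have hnorm : ‖(1 : E →L[ℝ] E) + a • B‖ ≤ (1 - a / b) + (a / b) * ‖1 + b • B‖ := by
    rw [hconv]
    refine (norm_add_le _ _).trans (add_le_add ?_ ?_)
    · rw [norm_smul, Real.norm_of_nonneg hθ']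
      exact mul_le_of_le_one_right hθ' ContinuousLinearMap.norm_id_le
    · rw [norm_smul, Real.norm_of_nonneg hθ]
  rw [logSlope, logSlope, div_le_div_iff₀ ha hb]
  have hrescale : (‖1 + b • B‖ - 1) * a = ((1 - a / b) + (a / b) * ‖1 + b • B‖ - 1) * b := by
    field_simp
    ring
  rw [hrescale]
  gcongr

theorem neg_norm_le_logSlope [Nontrivial E] (B : E →L[ℝ] E) {h : ℝ} (hh : 0 < h) :
    -‖B‖ ≤ logSlope B h := by
  have : ‖(1 : E →L[ℝ] E)‖ ≤ ‖1 + h • B‖ + ‖h • B‖ := norm_le_add_norm_add _ _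
  rw [norm_one, norm_smul, Real.norm_of_nonneg hh.le] at this
  rw [logSlope, le_div_iff₀ hh]
  linarith

theorem tendsto_logSlope [Nontrivial E] (B : E →L[ℝ] E) :
    Tendsto (logSlope B) (𝓝[>] 0) (𝓝 (sInf (logSlope B '' Ioi 0))) :=
  (monotoneOn_logSlope B).tendsto_nhdsGT ⟨-‖B‖, by
    rintro _ ⟨h, hh, rfl⟩
    exact neg_norm_le_logSlope B hh⟩

/-- Monotonicity in `h` upgrades pointwise bounds to uniform ones on a compact parameter set. -/
theorem eventually_forall_logSlope_lt {α : Type*} [TopologicalSpace α] {K : Set α}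
    (hK : IsCompact K) {B : α → E →L[ℝ] E} (hB : Continuous B) {c : ℝ}
    (hc : ∀ σ ∈ K, ∃ h > 0, logSlope (B σ) h < c) :
    ∀ᶠ h in 𝓝[>] 0, ∀ σ ∈ K, logSlope (B σ) h < c := by
  have hprod : ∀ᶠ p in 𝓝[>] 0 ×ˢ 𝓝ˢ K, logSlope (B p.2) p.1 < c := by
    refine hK.mem_prod_nhdsSet_of_forall fun σ hσ => ?_
    obtain ⟨h₁, hh₁, hlt⟩ := hc σ hσ
    have hcont : Continuous fun σ' => logSlope (B σ') h₁ := by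
      unfold logSlope
      fun_prop
    have hnear : ∀ᶠ σ' in 𝓝 σ, logSlope (B σ') h₁ < c :=
      hcont.continuousAt.eventually_lt continuousAt_const hlt
    filter_upwards [prod_mem_prod (Ioc_mem_nhdsGT hh₁) hnear] with ⟨h, σ'⟩ ⟨⟨hh, hh₁'⟩, hσ'⟩
    exact (monotoneOn_logSlope _ hh hh₁ hh₁').trans_lt hσ'
  exact hprod.curry.mono fun _ h => h.self_of_nhdsSet

end LogSlope

section Staircase

variable {n m : ℕ}

/-- `mixedJac g b a (fun _ => σ)` evaluates its `j`-th column at `stair a b j σ`. -/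
def stair (a b : Fin n → ℝ) (j : Fin n) (σ : ℝ) : Fin n → ℝ :=
  fun k => if k < j then a k else if k = j then σ * a j + (1 - σ) * b j else b k

def stairCorner (a b : Fin n → ℝ) (i : ℕ) : Fin n → ℝ :=
  fun k => if (k : ℕ) < i then a k else b k

theorem stairCorner_zero (a b : Fin n → ℝ) : stairCorner a b 0 = b := by
  funext k
  simp [stairCorner]

theorem stairCorner_self (a b : Fin n → ℝ) : stairCorner a b n = a := by
  funext k
  simp [stairCorner]

theorem stair_zero (a b : Fin n → ℝ) (j : Fin n) : stair a b j 0 = stairCorner a b j := by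
  funext k
  rcases lt_trichotomy k j with h | rfl | h
  · simp [stair, stairCorner, h, Fin.lt_def.1 h]
  · simp [stair, stairCorner]
  · simp [stair, stairCorner, h.not_gt, h.ne', Fin.lt_def.1 h |>.le |>.not_gt]

theorem stair_one (a b : Fin n → ℝ) (j : Fin n) : stair a b j 1 = stairCorner a b (j + 1) := by
  funext k
  rcases lt_trichotomy k j with h | rfl | h
  · simp [stair, stairCorner, h, (Fin.lt_def.1 h).trans (Nat.lt_succ_self _)]
  · simp [stair, stairCorner]
  · simp [stair, stairCorner, h.not_gt, h.ne', Nat.succ_le_of_lt (Fin.lt_def.1 h) |>.not_gt]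

theorem hasDerivAt_stair (a b : Fin n → ℝ) (j : Fin n) (σ : ℝ) :
    HasDerivAt (stair a b j) ((a j - b j) • Pi.single j 1) σ := by
  refine hasDerivAt_pi.2 fun k => ?_
  rcases lt_trichotomy k j with h | rfl | h
  · simpa [stair, h, h.ne] using hasDerivAt_const σ (a k)
  · have hline : (fun σ => σ * a k + (1 - σ) * b k) = fun σ => σ * (a k - b k) + b k := by
      funext σ
      ring
    simpa [stair, hline] using ((hasDerivAt_id σ).mul_const (a k - b k)).add_const (b k)
  · simpa [stair, h.not_gt, h.ne'] using hasDerivAt_const σ (b k)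

theorem continuous_stair (a b : Fin n → ℝ) (j : Fin n) : Continuous (stair a b j) :=
  continuous_iff_continuousAt.2 fun σ => (hasDerivAt_stair a b j σ).continuousAt

variable {g : (Fin n → ℝ) → Fin m → ℝ}

theorem continuous_mixedJac_const (hg' : Continuous (fderiv ℝ g)) (a b : Fin n → ℝ) :
    Continuous fun σ : ℝ => mixedJac g b a fun _ => σ :=
  continuous_pi fun i => continuous_pi fun j =>
    (continuous_apply i).comp ((hg'.comp (continuous_stair a b j)).clm_apply continuous_const)

theorem mixedJac_const_mulVec (a b : Fin n → ℝ) (σ : ℝ) :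
    (mixedJac g b a fun _ => σ) *ᵥ (a - b)
      = ∑ j, fderiv ℝ g (stair a b j σ) ((a j - b j) • Pi.single j 1) := by
  funext i
  simp only [Matrix.mulVec, dotProduct, mixedJac, Finset.sum_apply, map_smul, Pi.smul_apply,
    smul_eq_mul, Pi.sub_apply]
  exact Finset.sum_congr rfl fun j _ => mul_comm _ _

theorem sub_eq_integral_mixedJac_mulVec (hg : Differentiable ℝ g)
    (hg' : Continuous (fderiv ℝ g)) (a b : Fin n → ℝ) :
    g a - g b = ∫ σ in (0 : ℝ)..1, (mixedJac g b a fun _ => σ) *ᵥ (a - b) := by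
  have hderiv (σ : ℝ) : HasDerivAt (fun σ => ∑ j, g (stair a b j σ))
      ((mixedJac g b a fun _ => σ) *ᵥ (a - b)) σ := by
    rw [mixedJac_const_mulVec]
    exact HasDerivAt.fun_sum fun j _ =>
      (hg _).hasFDerivAt.comp_hasDerivAt σ (hasDerivAt_stair a b j σ)
  rw [intervalIntegral.integral_eq_sub_of_hasDerivAt (fun σ _ => hderiv σ)
    (((continuous_mixedJac_const hg' a b).matrix_mulVec continuous_const).intervalIntegrable _ _),
    ← Finset.sum_sub_distrib]
  simp only [stair_one, stair_zero]
  rw [Fin.sum_univ_eq_sum_range (fun i => g (stairCorner a b (i + 1)) - g (stairCorner a b i)),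
    Finset.sum_range_sub (fun i => g (stairCorner a b i)), stairCorner_self, stairCorner_zero]

end Staircase

section Integral

variable {E : Type*} [NormedAddCommGroup E] [NormedSpace ℝ E]

theorem norm_add_smul_integral_apply_le [CompleteSpace E] {B : ℝ → E →L[ℝ] E}
    (hB : Continuous B) (y : E) {h K : ℝ} (hK : ∀ σ ∈ Icc (0 : ℝ) 1, ‖1 + h • B σ‖ ≤ K) :
    ‖y + h • ∫ σ in (0 : ℝ)..1, B σ y‖ ≤ K * ‖y‖ := by
  have hint : IntervalIntegrable (fun σ => h • B σ y) MeasureTheory.volume 0 1 :=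
    ((hB.clm_apply continuous_const).const_smul h).intervalIntegrable _ _
  have hy : y + h • ∫ σ in (0 : ℝ)..1, B σ y = ∫ σ in (0 : ℝ)..1, (1 + h • B σ) y := by
    simp only [_root_.add_apply, one_apply_eq_self, _root_.smul_apply]
    rw [intervalIntegral.integral_add intervalIntegrable_const hint,
      intervalIntegral.integral_smul, intervalIntegral.integral_const, sub_zero, one_smul]
  rw [hy]
  simpa using intervalIntegral.norm_integral_le_of_norm_le_const fun σ (hσ : σ ∈ uIoc 0 1) =>
    ((1 + h • B σ).le_opNorm y).trans <| mul_le_mul_of_nonneg_right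
      (hK σ (Ioc_subset_Icc_self (by rwa [uIoc_of_le zero_le_one] at hσ))) (norm_nonneg y)

end Integral

namespace IsNorm

variable {n : ℕ} {N : (Fin n → ℝ) → ℝ}

instance (hN : IsNorm N) [NeZero n] : Nontrivial hN.Space :=
  inferInstanceAs (Nontrivial (Fin n → ℝ))

theorem tendsto_logSlope_logNorm (hN : IsNorm N) [NeZero n] (A : Matrix (Fin n) (Fin n) ℝ) :
    Tendsto (logSlope (hN.toCLM A)) (𝓝[>] 0) (𝓝 (logNorm N A)) := by
  have hA : (fun h => (opNorm N (1 + h • A) - 1) / h) = logSlope (hN.toCLM A) := by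
    funext h
    rw [opNorm_eq_norm_toCLM, map_add, map_smul, toCLM_one, logSlope]
  rw [logNorm, hA, (tendsto_logSlope _).limUnder_eq]
  exact tendsto_logSlope _

theorem eventually_norm_add_smul_sub_le (hN : IsNorm N) [NeZero n] {g : (Fin n → ℝ) → Fin n → ℝ}
    (hg : Differentiable ℝ g) (hg' : Continuous (fderiv ℝ g)) {a b : Fin n → ℝ} {c : ℝ}
    (hμ : ∀ σ ∈ Icc (0 : ℝ) 1, logNorm N (mixedJac g b a fun _ => σ) ≤ c) {ε : ℝ} (hε : 0 < ε) :
    ∀ᶠ h in 𝓝[>] 0, N (a - b + h • (g a - g b)) ≤ (1 + (c + ε) * h) * N (a - b) := by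
  set B : ℝ → hN.Space →L[ℝ] hN.Space := fun σ => hN.toCLM (mixedJac g b a fun _ => σ)
  have hB : Continuous B :=
    hN.toCLM.continuous_of_finiteDimensional.comp (continuous_mixedJac_const hg' a b)
  have hslope (σ : ℝ) (hσ : σ ∈ Icc (0 : ℝ) 1) : ∃ h > 0, logSlope (B σ) h < c + ε :=
    (((hN.tendsto_logSlope_logNorm _).eventually (gt_mem_nhds (by linarith [hμ σ hσ]))).and
      self_mem_nhdsWithin).exists.imp fun _ hh => ⟨hh.2, hh.1⟩
  filter_upwards [eventually_forall_logSlope_lt isCompact_Icc hB hslope, self_mem_nhdsWithin]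
    with h hlt (hh : 0 < h)
  have hnorm (σ : ℝ) (hσ : σ ∈ Icc (0 : ℝ) 1) : ‖1 + h • B σ‖ ≤ 1 + (c + ε) * h := by
    have := hlt σ hσ
    rw [logSlope, div_lt_iff₀ hh] at this
    linarith
  have hmvt : hN.toSpace (g a - g b) = ∫ σ in (0 : ℝ)..1, B σ (hN.toSpace (a - b)) := by
    rw [sub_eq_integral_mixedJac_mulVec hg hg']
    refine (ContinuousLinearMap.intervalIntegral_comp_comm
      (hN.toSpace : (Fin n → ℝ) →L[ℝ] hN.Space) ?_).symm
    exact ((continuous_mixedJac_const hg' a b).matrix_mulVec continuous_const).intervalIntegrable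
      _ _
  calc N (a - b + h • (g a - g b))
      = ‖hN.toSpace (a - b) + h • ∫ σ in (0 : ℝ)..1, B σ (hN.toSpace (a - b))‖ := by
        rw [← hmvt]
        rfl
    _ ≤ (1 + (c + ε) * h) * N (a - b) := norm_add_smul_integral_apply_le hB _ hnorm

end IsNorm

section Comparison

/-- Apply the closed-interval Grönwall inequality on `[s, b]` and let `s → a⁺`. -/
theorem le_exp_mul_of_frequently_slope_lt {φ : ℝ → ℝ} {a b c : ℝ}
    (hφ : ContinuousOn φ (Icc a b))
    (hslope : ∀ t ∈ Ioo a b, ∀ r, c * φ t < r → ∃ᶠ z in 𝓝[>] t, slope φ t z < r) :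
    ∀ t ∈ Icc a b, φ t ≤ Real.exp (c * (t - a)) * φ a := by
  rintro t ⟨hat, htb⟩
  rcases hat.eq_or_lt with rfl | hat
  · simp
  have hlim : Tendsto (fun s => Real.exp (c * (t - s)) * φ s) (𝓝[>] a)
      (𝓝 (Real.exp (c * (t - a)) * φ a)) := by
    refine Tendsto.mul ?_ ?_
    · exact ((continuous_const.mul (continuous_const.sub continuous_id)).rexp.tendsto a).mono_left
        nhdsWithin_le_nhds
    · exact ((hφ a (left_mem_Icc.2 (hat.le.trans htb))).mono_of_mem_nhdsWithin
        (Icc_mem_nhdsGT (hat.trans_le htb))).tendsto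
  refine ge_of_tendsto hlim ?_
  filter_upwards [Ioo_mem_nhdsGT hat] with s ⟨has, hst⟩
  have := le_gronwallBound_of_liminf_deriv_right_le (f' := fun t => c * φ t) (K := c) (ε := 0)
    (hφ.mono (Icc_subset_Icc_left has.le))
    (fun u hu r hr => hslope u ⟨has.trans_le hu.1, hu.2⟩ r hr) le_rfl (fun _ _ => by simp)
    t ⟨hst.le, htb⟩
  rwa [gronwallBound_ε0, mul_comm] at this

variable {E : Type*} [NormedAddCommGroup E] [NormedSpace ℝ E]

theorem eventually_slope_norm_lt {y : ℝ → E} {y' : E} {t c r : ℝ} (hy : HasDerivAt y y' t)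
    (hbound : ∀ ε > 0, ∀ᶠ h in 𝓝[>] 0, ‖y t + h • y'‖ ≤ (1 + (c + ε) * h) * ‖y t‖)
    (hr : c * ‖y t‖ < r) : ∀ᶠ z in 𝓝[>] t, slope (fun z => ‖y z‖) t z < r := by
  have hcε : Tendsto (fun ε => (c + ε) * ‖y t‖) (𝓝[>] 0) (𝓝 (c * ‖y t‖)) := by
    have : Continuous fun ε => (c + ε) * ‖y t‖ := by fun_prop
    simpa using (this.tendsto 0).mono_left nhdsWithin_le_nhds
  obtain ⟨ε, hεr, hε⟩ := ((hcε.eventually (gt_mem_nhds hr)).and self_mem_nhdsWithin).exists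
  have hderiv : Tendsto (fun z => ‖slope y t z - y'‖) (𝓝[>] t) (𝓝 0) :=
    tendsto_iff_norm_sub_tendsto_zero.1 <|
      (hasDerivAt_iff_tendsto_slope.1 hy).mono_left (nhdsWithin_mono _ fun _ hz => hz.ne')
  have hshift : Tendsto (fun z => z - t) (𝓝[>] t) (𝓝[>] 0) := by
    rw [← sub_self t, ← map_subRight_nhdsGT]
    exact tendsto_map
  filter_upwards [hderiv.eventually (gt_mem_nhds (sub_pos.2 hεr)),
    hshift.eventually (hbound ε hε), self_mem_nhdsWithin] with z hz hzb (htz : t < z)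
  have hsplit : y z = (y t + (z - t) • y') + (z - t) • (slope y t z - y') := by
    rw [smul_sub, sub_smul_slope, vsub_eq_sub]
    abel
  have hyz : ‖y z‖ ≤ (1 + (c + ε) * (z - t)) * ‖y t‖ + (z - t) * ‖slope y t z - y'‖ := by
    calc ‖y z‖ ≤ ‖y t + (z - t) • y'‖ + ‖(z - t) • (slope y t z - y')‖ :=
          hsplit ▸ norm_add_le _ _
      _ ≤ _ := by
        rw [norm_smul, Real.norm_of_nonneg (sub_nonneg.2 htz.le)]
        exact add_le_add_left hzb _
  rw [slope_def_field, div_lt_iff₀ (sub_pos.2 htz)]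
  nlinarith

theorem norm_le_exp_mul_of_eventually_norm_add_smul_le {y y' : ℝ → E} {a b c : ℝ}
    (hy : ContinuousOn y (Icc a b)) (hy' : ∀ t ∈ Ioo a b, HasDerivAt y (y' t) t)
    (hbound : ∀ t ∈ Ioo a b, ∀ ε > 0,
      ∀ᶠ h in 𝓝[>] 0, ‖y t + h • y' t‖ ≤ (1 + (c + ε) * h) * ‖y t‖) :
    ∀ t ∈ Icc a b, ‖y t‖ ≤ Real.exp (c * (t - a)) * ‖y a‖ :=
  le_exp_mul_of_frequently_slope_lt hy.norm fun t ht _ hr =>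
    (eventually_slope_norm_lt (hy' t ht) (hbound t ht) hr).frequently

end Comparison

theorem stmt7_general {n : ℕ} (N : (Fin n → ℝ) → ℝ) (hN : IsNorm N)
    (X : Set (Fin n → ℝ)) (f : ℝ → (Fin n → ℝ) → (Fin n → ℝ))
    (hfd : ∀ t, Differentiable ℝ (f t))
    (hfd' : Continuous fun p : ℝ × (Fin n → ℝ) => fderiv ℝ (f p.1) p.2)
    (J : Set ℝ)
    (x' : ℝ → Fin n → ℝ) (hx'c : ContinuousOn x' J)
    (hx'd : ∀ t ∈ interior J, HasDerivAt x' (f t (x' t)) t)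
    (c : ℝ)
    (hμ : ∀ t ∈ J, ∀ x ∈ X, ∀ s : Fin n → ℝ, (∀ k, s k ∈ Icc (0:ℝ) 1) →
      logNorm N (mixedJac (f t) (x' t) x s) ≤ c)
    (t₀ T : ℝ) (hsub : Icc t₀ T ⊆ J)
    (x : ℝ → Fin n → ℝ) (hxc : ContinuousOn x (Icc t₀ T))
    (hxd : ∀ t ∈ Ioo t₀ T, HasDerivAt x (f t (x t)) t)
    (hxX : ∀ t ∈ Icc t₀ T, x t ∈ X) :
    ∀ t ∈ Icc t₀ T, N (x t - x' t) ≤ Real.exp (c * (t - t₀)) * N (x t₀ - x' t₀) := by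
  rcases Nat.eq_zero_or_pos n with rfl | hn
  · intro t _
    rw [Subsingleton.elim (x t - x' t) 0, Subsingleton.elim (x t₀ - x' t₀) 0, hN.map_zero,
      mul_zero]
  have : NeZero n := ⟨hn.ne'⟩
  have hIoo : Ioo t₀ T ⊆ interior J := interior_Icc (a := t₀) (b := T) ▸ interior_mono hsub
  exact norm_le_exp_mul_of_eventually_norm_add_smul_le
    (y := fun t => hN.toSpace (x t - x' t)) (y' := fun t => hN.toSpace (f t (x t) - f t (x' t)))
    (hN.toSpace.continuous.comp_continuousOn (hxc.sub (hx'c.mono hsub)))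
    (fun t ht => hN.toSpace.hasFDerivAt.comp_hasDerivAt t ((hxd t ht).sub (hx'd t (hIoo ht))))
    (fun t ht _ hε => hN.eventually_norm_add_smul_sub_le (hfd t)
      (hfd'.comp (continuous_const.prodMk continuous_id))
      (fun σ hσ => hμ t (hsub (Ioo_subset_Icc_self ht)) _ (hxX t (Ioo_subset_Icc_self ht)) _
        fun _ => hσ) hε)

theorem stmt7 {n : ℕ} (N : (Fin n → ℝ) → ℝ) (hN : IsNorm N)
    (X : Set (Fin n → ℝ)) (f : ℝ → (Fin n → ℝ) → (Fin n → ℝ))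
    (hfc : Continuous fun p : ℝ × (Fin n → ℝ) => f p.1 p.2)
    (hfd : ∀ t, Differentiable ℝ (f t))
    (hfd' : Continuous fun p : ℝ × (Fin n → ℝ) => fderiv ℝ (f p.1) p.2)
    (J : Set ℝ) (hJ : J.OrdConnected)
    (x' : ℝ → Fin n → ℝ) (hx'c : ContinuousOn x' J)
    (hx'd : ∀ t ∈ interior J, HasDerivAt x' (f t (x' t)) t)
    (hx'X : ∀ t ∈ J, x' t ∈ X)
    (c : ℝ)
    (hμ : ∀ t ∈ J, ∀ x ∈ X, ∀ s : Fin n → ℝ, (∀ k, s k ∈ Icc (0:ℝ) 1) →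
      logNorm N (mixedJac (f t) (x' t) x s) ≤ c)
    (t₀ T : ℝ) (ht : t₀ ≤ T) (hsub : Icc t₀ T ⊆ J)
    (x : ℝ → Fin n → ℝ) (hxc : ContinuousOn x (Icc t₀ T))
    (hxd : ∀ t ∈ Ioo t₀ T, HasDerivAt x (f t (x t)) t)
    (hxX : ∀ t ∈ Icc t₀ T, x t ∈ X) :
    ∀ t ∈ Icc t₀ T, N (x t - x' t) ≤ Real.exp (c * (t - t₀)) * N (x t₀ - x' t₀) :=
  stmt7_general N hN X f hfd hfd' J x' hx'c hx'd c hμ t₀ T hsub x hxc hxd hxX
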